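/- Free-flight distance along the separatrix branch W₂ (Proposition C.1): let a > b > 0, c = sqrt(a² − b²), λ = (a+c)/(a−c). Let φ₀ ∈ (0, π), ξ₀ = tan(φ₀/2), and φ₁ = 2 arctan(λ^{−1} ξ₀). Then sqrt( a² (cos φ₀ + cos φ₁)² + b² (sin φ₀ + sin φ₁)² ) = 2a (λ + ξ₀²)² / ( (λ² + ξ₀²)(1 + ξ₀²) ). -/

import Mathlib

/-!
Writing both collision parameters as `2 arctan`, the sums `cos φ₀ + cos φ₁` and
`sin φ₀ + sin φ₁` become rational in `t = tan (φ₀/2)` with the common factor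
`2 (λ + t²) / ((1 + t²)(λ² + t²))`. The ellipse enters only through `b² (λ + 1)² = 4 a² λ`,
which turns the remaining `a² (λ - t²)² + b² t² (λ + 1)²` into the perfect square `a² (λ + t²)²`.
-/

open Real

theorem cos_two_mul_arctan (x : ℝ) : cos (2 * arctan x) = (1 - x ^ 2) / (1 + x ^ 2) := by
  rw [cos_two_mul, cos_sq_arctan]
  field_simp
  ring

theorem sin_two_mul_arctan (x : ℝ) : sin (2 * arctan x) = 2 * x / (1 + x ^ 2) := by
  rw [sin_two_mul, mul_assoc, ← tan_mul_cos (cos_arctan_pos x).ne', mul_assoc, ← sq,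
    cos_sq_arctan, tan_arctan]
  ring

theorem sq_mul_add_one_sq_of_eq_div {a b c lam : ℝ} (hca : c ≠ a) (hc : c ^ 2 = a ^ 2 - b ^ 2)
    (hlam : lam = (a + c) / (a - c)) : b ^ 2 * (lam + 1) ^ 2 = 4 * a ^ 2 * lam := by
  have : a - c ≠ 0 := sub_ne_zero.2 hca.symm
  subst hlam
  field_simp
  linear_combination (4 * a ^ 2) * hc

section Chord

variable {lam : ℝ} (hlam : lam ≠ 0) (t : ℝ)
include hlam

theorem cos_two_mul_arctan_add_cos_two_mul_arctan_inv_mul :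
    cos (2 * arctan t) + cos (2 * arctan (lam⁻¹ * t))
      = 2 * (lam - t ^ 2) * (lam + t ^ 2) / ((1 + t ^ 2) * (lam ^ 2 + t ^ 2)) := by
  have : lam ^ 2 + t ^ 2 ≠ 0 := by positivity
  rw [cos_two_mul_arctan, cos_two_mul_arctan]
  field_simp
  ring

theorem sin_two_mul_arctan_add_sin_two_mul_arctan_inv_mul :
    sin (2 * arctan t) + sin (2 * arctan (lam⁻¹ * t))
      = 2 * t * (lam + 1) * (lam + t ^ 2) / ((1 + t ^ 2) * (lam ^ 2 + t ^ 2)) := by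
  have : lam ^ 2 + t ^ 2 ≠ 0 := by positivity
  rw [sin_two_mul_arctan, sin_two_mul_arctan]
  field_simp
  ring

theorem chord_sq_two_mul_arctan {a b : ℝ} (hb : b ^ 2 * (lam + 1) ^ 2 = 4 * a ^ 2 * lam) :
    a ^ 2 * (cos (2 * arctan t) + cos (2 * arctan (lam⁻¹ * t))) ^ 2
        + b ^ 2 * (sin (2 * arctan t) + sin (2 * arctan (lam⁻¹ * t))) ^ 2
      = (2 * a * (lam + t ^ 2) ^ 2 / ((lam ^ 2 + t ^ 2) * (1 + t ^ 2))) ^ 2 := by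
  have : lam ^ 2 + t ^ 2 ≠ 0 := by positivity
  rw [cos_two_mul_arctan_add_cos_two_mul_arctan_inv_mul hlam,
    sin_two_mul_arctan_add_sin_two_mul_arctan_inv_mul hlam]
  field_simp
  linear_combination (t ^ 2 * (lam + t ^ 2) ^ 2) * hb

end Chord

/-- Proposition C.1: free-flight distance along the separatrix branch
`W₂`.  With `ξ₀ = tan(φ₀/2)` and `φ₁ = 2 arctan(λ⁻¹ ξ₀)`, the chord length
`sqrt(a²(cos φ₀ + cos φ₁)² + b²(sin φ₀ + sin φ₁)²)` equals
`2a(λ + ξ₀²)² / ((λ² + ξ₀²)(1 + ξ₀²))`. -/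
theorem free_flight_distance_W2
    (a b : ℝ) (hb : 0 < b) (hab : b < a)
    (c lam : ℝ) (hc : c = Real.sqrt (a ^ 2 - b ^ 2)) (hlam : lam = (a + c) / (a - c))
    (φ₀ : ℝ) (hφ₀ : φ₀ ∈ Set.Ioo 0 Real.pi)
    (ξ₀ : ℝ) (hξ₀ : ξ₀ = Real.tan (φ₀ / 2))
    (φ₁ : ℝ) (hφ₁ : φ₁ = 2 * Real.arctan (lam⁻¹ * ξ₀)) :
    Real.sqrt (a ^ 2 * (Real.cos φ₀ + Real.cos φ₁) ^ 2 +
        b ^ 2 * (Real.sin φ₀ + Real.sin φ₁) ^ 2)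
      = 2 * a * (lam + ξ₀ ^ 2) ^ 2 / ((lam ^ 2 + ξ₀ ^ 2) * (1 + ξ₀ ^ 2)) := by
  have ha : 0 < a := hb.trans hab
  have hsq : 0 ≤ a ^ 2 - b ^ 2 := by nlinarith
  have hc0 : 0 ≤ c := hc ▸ sqrt_nonneg _
  have hca : c < a := hc ▸ (sqrt_lt' ha).2 (by nlinarith)
  have hc2 : c ^ 2 = a ^ 2 - b ^ 2 := hc ▸ sq_sqrt hsq
  have hlam0 : 0 < lam := hlam ▸ div_pos (by linarith) (by linarith)
  have hφ₀' : φ₀ = 2 * arctan ξ₀ := by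
    rw [hξ₀, arctan_tan (by linarith [hφ₀.1, pi_pos]) (by linarith [hφ₀.2])]
    ring
  rw [hφ₀', hφ₁, chord_sq_two_mul_arctan hlam0.ne' ξ₀
    (sq_mul_add_one_sq_of_eq_div hca.ne hc2 hlam), sqrt_sq (by positivity)]
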